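/- arXiv:1407.4964 — 9 statements merged into one kernel-verified Lean document; each statement's English description precedes it below -/
import Mathlib

section
/- Let s = q/q₁ be a meromorphic function on ℂ with q, q₁ entire having no common zeros, and let g₁ be entire with g = q₁·e^{-g₁} such that 1/g and s have the same principal parts at every pole of s. Define h = s - 1/g. Then h extends to an entire function on ℂ and for all z ∈ ℂ with q₁(z) ≠ 0, h(z) ≠ s(z); i.e. the graph of h does not meet the graph of s. -/
open Complex Filter Topology

/-!
Off the zeros of `q₁` the function `s - 1/g` is holomorphic, and at each zero it agrees on a
punctured neighbourhood with the local holomorphic function given by the principal-part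
hypothesis; since the zeros of `q₁` are isolated, these local pieces glue to an entire function.
Its graph misses that of `s` because `1/g = e^{g₁}/q₁` never vanishes.
-/

theorem Differentiable.eventually_ne_zero_nhdsNE {E : Type*} [NormedAddCommGroup E]
    [NormedSpace ℂ E] [CompleteSpace E] {f : ℂ → E} (hf : Differentiable ℂ f) {w : ℂ}
    (hw : f w ≠ 0) (z₀ : ℂ) : ∀ᶠ z in 𝓝[≠] z₀, f z ≠ 0 := by
  have hfa : AnalyticOnNhd ℂ f Set.univ := fun z _ ↦ hf.analyticAt z
  refine not_frequently.mp fun hfreq ↦ hw ?_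
  exact hfa.eqOn_zero_of_preconnected_of_frequently_eq_zero isPreconnected_univ
    (Set.mem_univ z₀) hfreq (Set.mem_univ w)

theorem exists_differentiable_eqOn_compl_of_isolated {E : Type*} [NormedAddCommGroup E]
    [NormedSpace ℂ E] {f : ℂ → E} {S : Set ℂ} (hS : ∀ z, ∀ᶠ w in 𝓝[≠] z, w ∉ S)
    (hf : ∀ z ∉ S, DifferentiableAt ℂ f z)
    (hrem : ∀ z ∈ S, ∃ g : ℂ → E, DifferentiableAt ℂ g z ∧ ∀ᶠ w in 𝓝[≠] z, g w = f w) :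
    ∃ h : ℂ → E, Differentiable ℂ h ∧ Set.EqOn h f Sᶜ := by
  classical
  choose g hgd hgf using hrem
  let h : ℂ → E := fun z ↦ if hz : z ∈ S then g z hz z else f z
  have hh : Set.EqOn h f Sᶜ := fun z hz ↦ dif_neg hz
  refine ⟨h, fun z ↦ ?_, hh⟩
  by_cases hz : z ∈ S
  · refine (hgd z hz).congr_of_eventuallyEq ?_
    have hne : ∀ᶠ w in 𝓝 z, w ≠ z → w ∉ S ∧ g z hz w = f w :=
      eventually_nhdsWithin_iff.mp ((hS z).and (hgf z hz))
    filter_upwards [hne] with w hw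
    rcases eq_or_ne w z with rfl | hwz
    · exact dif_pos hz
    · exact (hh (hw hwz).1).trans (hw hwz).2.symm
  · have hnear : ∀ᶠ w in 𝓝 z, w ∉ S := by
      filter_upwards [eventually_nhdsWithin_iff.mp (hS z)] with w hw
      rcases eq_or_ne w z with rfl | hwz
      exacts [hz, hw hwz]
    exact (hf z hz).congr_of_eventuallyEq (hnear.mono fun w hw ↦ hh hw)

theorem stmt_1_general (q q₁ g₁ : ℂ → ℂ)
    (hq : Differentiable ℂ q) (hq₁ : Differentiable ℂ q₁) (hg₁ : Differentiable ℂ g₁)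
    -- `s - 1/g` has a removable singularity at every pole of `s`:
    (hpp : ∀ z₀ : ℂ, q₁ z₀ = 0 →
      ∃ (U : Set ℂ) (h₀ : ℂ → ℂ), U ∈ nhds z₀ ∧ DifferentiableOn ℂ h₀ U ∧
        ∀ z ∈ U, q₁ z ≠ 0 →
          h₀ z = q z / q₁ z - 1 / (q₁ z * Complex.exp (-(g₁ z)))) :
    ∃ h : ℂ → ℂ, Differentiable ℂ h ∧
      (∀ z : ℂ, q₁ z ≠ 0 →
        h z = q z / q₁ z - 1 / (q₁ z * Complex.exp (-(g₁ z)))) ∧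
      (∀ z : ℂ, q₁ z ≠ 0 → h z ≠ q z / q₁ z) := by
  by_cases hzero : ∀ z, q₁ z = 0
  · exact ⟨0, differentiable_const 0, fun z hz ↦ absurd (hzero z) hz,
      fun z hz ↦ absurd (hzero z) hz⟩
  obtain ⟨w, hw⟩ := not_forall.mp hzero
  have hiso := hq₁.eventually_ne_zero_nhdsNE hw
  obtain ⟨h, hdiff, hh⟩ := exists_differentiable_eqOn_compl_of_isolated
    (f := fun z ↦ q z / q₁ z - 1 / (q₁ z * exp (-(g₁ z)))) (S := {z | q₁ z = 0}) hiso
    (fun z hz ↦ by fun_prop (disch := simp_all [exp_ne_zero]))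
    (fun z₀ hz₀ ↦ by
      obtain ⟨U, h₀, hU, hh₀, heq⟩ := hpp z₀ hz₀
      refine ⟨h₀, hh₀.differentiableAt hU, ?_⟩
      filter_upwards [nhdsWithin_le_nhds hU, hiso z₀] with z hzU hz
      exact heq z hzU hz)
  refine ⟨h, hdiff, fun z hz ↦ hh hz, fun z hz ↦ ?_⟩
  rw [hh hz, Ne, sub_eq_self]
  exact one_div_ne_zero (mul_ne_zero hz (exp_ne_zero _))

/-- with `s = q/q₁` (no common zeros), `g = q₁·e^{-g₁}` such that `1/g` and `s`
have the same principal parts at every pole of `s` (i.e. `s - 1/g` has removable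
singularities at all poles of `s`), the function `h = s - 1/g` extends to an entire
function whose graph does not meet the graph of `s`. -/
theorem stmt_1 (q q₁ g₁ : ℂ → ℂ)
    (hq : Differentiable ℂ q) (hq₁ : Differentiable ℂ q₁) (hg₁ : Differentiable ℂ g₁)
    (hnc : ∀ z : ℂ, ¬(q z = 0 ∧ q₁ z = 0))
    -- `s - 1/g` has a removable singularity at every pole of `s`:
    (hpp : ∀ z₀ : ℂ, q₁ z₀ = 0 →
      ∃ (U : Set ℂ) (h₀ : ℂ → ℂ), U ∈ nhds z₀ ∧ DifferentiableOn ℂ h₀ U ∧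
        ∀ z ∈ U, q₁ z ≠ 0 →
          h₀ z = q z / q₁ z - 1 / (q₁ z * Complex.exp (-(g₁ z)))) :
    ∃ h : ℂ → ℂ, Differentiable ℂ h ∧
      (∀ z : ℂ, q₁ z ≠ 0 →
        h z = q z / q₁ z - 1 / (q₁ z * Complex.exp (-(g₁ z)))) ∧
      (∀ z : ℂ, q₁ z ≠ 0 → h z ≠ q z / q₁ z) :=
  stmt_1_general q q₁ g₁ hq hq₁ hg₁ hpp
end

section
/- Let s = q/q₁ with q, q₁ entire without common zeros, g entire with g(z) = q₁(z)e^{-g₁(z)}, and suppose h = s - 1/g is entire. Then the map Φ(z,w) = (z, s(z) - e^{g(z)w}/g(z)) (interpreted as (z, h(z) - w) when g(z) = 0) is a holomorphic map from ℂ² onto ℂ² \ graph(s), and its Jacobian determinant is nowhere vanishing. -/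
open Complex

/-- The entire function `Ψ(t,w) = (e^{tw} - 1)/t`, extended by `Ψ(0,w) = w`. -/
noncomputable def Psi : ℂ × ℂ → ℂ :=
  fun p => if p.1 = 0 then p.2 else (Complex.exp (p.1 * p.2) - 1) / p.1

/-- The Buzzard–Lu map `Φ(z,w) = (z, h(z) - Ψ(g(z), w)) = (z, s(z) - e^{g(z)w}/g(z))`,
interpreted as `(z, h(z) - w)` when `g(z) = 0`. -/
noncomputable def PhiBL (g₁ h : ℂ → ℂ) (g : ℂ → ℂ) : ℂ × ℂ → ℂ × ℂ :=
  fun p => (p.1, h p.1 - Psi (g p.1, p.2))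

/-!
Fibrewise, `Φ(z, w) = (z, h(z) - Ψ(g(z), w))`. As `1 + t Ψ(t, w) = e^{tw}` and `exp` maps `ℂ` onto
`ℂ \ {0}`, the map `w ↦ Ψ(t, w)` has derivative `e^{tw} ≠ 0` and image `{v | 1 + t v ≠ 0}`.
Where `q₁ ≠ 0`, `h = q/q₁ - 1/g` gives `1 + g (h - v) = e^{-g₁} (q - q₁ v)`; where `q₁ = 0`, we have
`g = 0` and `q ≠ 0`. Either way `1 + g (h - v) ≠ 0` iff `q₁ v ≠ q`. Holomorphy of `Ψ` across
`t = 0` follows from `Ψ(t, w) = w · E(tw)` with `E = dslope exp 0` entire.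
-/

theorem differentiable_dslope {E : Type*} [NormedAddCommGroup E] [NormedSpace ℂ E]
    [CompleteSpace E] {f : ℂ → E} (hf : Differentiable ℂ f) (c : ℂ) :
    Differentiable ℂ (dslope f c) := fun z =>
  (((differentiableOn_dslope Filter.univ_mem).2 hf.differentiableOn) z trivial).differentiableAt
    Filter.univ_mem

namespace Psi

theorem zero_left (w : ℂ) : Psi (0, w) = w := if_pos rfl

theorem of_ne {t : ℂ} (ht : t ≠ 0) (w : ℂ) : Psi (t, w) = (exp (t * w) - 1) / t := if_neg ht

theorem eq_mul_dslope_exp (p : ℂ × ℂ) : Psi p = p.2 * dslope exp 0 (p.1 * p.2) := by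
  obtain ⟨t, w⟩ := p
  rcases eq_or_ne t 0 with rfl | ht
  · simp [zero_left, dslope_same, Complex.deriv_exp]
  rcases eq_or_ne w 0 with rfl | hw
  · simp [of_ne ht]
  rw [of_ne ht, dslope_of_ne _ (mul_ne_zero ht hw), slope_def_field, exp_zero, sub_zero]
  field_simp

theorem differentiable : Differentiable ℂ Psi := by
  rw [funext eq_mul_dslope_exp]
  exact differentiable_snd.mul
    ((differentiable_dslope differentiable_exp 0).comp (differentiable_fst.mul differentiable_snd))

theorem hasDerivAt_snd (t w : ℂ) : HasDerivAt (fun w' => Psi (t, w')) (exp (t * w)) w := by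
  rcases eq_or_ne t 0 with rfl | ht
  · simpa [zero_left] using hasDerivAt_id' w
  simp only [of_ne ht]
  refine ((((hasDerivAt_id' w).const_mul t).cexp.sub_const 1).div_const t).congr_deriv ?_
  field_simp

theorem mem_range_snd_iff {t v : ℂ} : v ∈ Set.range (fun w => Psi (t, w)) ↔ 1 + t * v ≠ 0 := by
  rcases eq_or_ne t 0 with rfl | ht
  · simp [zero_left]
  have hexp : ∀ w, Psi (t, w) = v ↔ exp (t * w) = 1 + t * v := fun w => by
    rw [of_ne ht, div_eq_iff ht, sub_eq_iff_eq_add, add_comm, mul_comm v]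
  simp only [Set.mem_range, hexp]
  constructor
  · rintro ⟨w, hw⟩
    exact hw ▸ exp_ne_zero _
  · intro hv
    obtain ⟨u, hu⟩ : 1 + t * v ∈ Set.range exp := by rwa [range_exp]
    exact ⟨u / t, by rwa [mul_div_cancel₀ u ht]⟩

end Psi

namespace PhiBL

variable (g₁ h g : ℂ → ℂ)

theorem differentiable (hh : Differentiable ℂ h) (hg : Differentiable ℂ g) :
    Differentiable ℂ (PhiBL g₁ h g) :=
  differentiable_fst.prodMk ((hh.comp differentiable_fst).sub
    (Psi.differentiable.comp ((hg.comp differentiable_fst).prodMk differentiable_snd)))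

theorem range_eq : Set.range (PhiBL g₁ h g) = {p | 1 + g p.1 * (h p.1 - p.2) ≠ 0} := by
  ext ⟨z, v⟩
  rw [Set.mem_ofPred_eq, ← Psi.mem_range_snd_iff]
  simp only [PhiBL, Set.mem_range, Prod.exists, Prod.mk.injEq]
  constructor
  · rintro ⟨_, w, rfl, hw⟩
    exact ⟨w, by rw [← hw, sub_sub_cancel]⟩
  · rintro ⟨w, hw⟩
    exact ⟨z, w, rfl, by rw [hw, sub_sub_cancel]⟩

theorem hasDerivAt_snd (z w : ℂ) :
    HasDerivAt (fun w' => (PhiBL g₁ h g (z, w')).2) (-exp (g z * w)) w := by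
  exact (Psi.hasDerivAt_snd (g z) w).const_sub (h z)

end PhiBL

theorem one_add_mul_sub_ne_zero_iff {q q₁ e h v : ℂ} (he : e ≠ 0) (hnc : ¬(q = 0 ∧ q₁ = 0))
    (hrel : q₁ ≠ 0 → h = q / q₁ - 1 / (q₁ * e)) :
    1 + q₁ * e * (h - v) ≠ 0 ↔ q₁ * v ≠ q := by
  rcases eq_or_ne q₁ 0 with rfl | hq₁
  · simpa [eq_comm] using fun hq => hnc ⟨hq, rfl⟩
  have key : 1 + q₁ * e * (h - v) = e * (q - q₁ * v) := by
    rw [hrel hq₁]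
    field_simp
    ring
  rw [key, mul_ne_zero_iff, and_iff_right he, sub_ne_zero, ne_comm]

theorem stmt_2_general (q q₁ g₁ h : ℂ → ℂ)
    (hq₁ : Differentiable ℂ q₁) (hg₁ : Differentiable ℂ g₁)
    (hnc : ∀ z : ℂ, ¬(q z = 0 ∧ q₁ z = 0))
    (hh : Differentiable ℂ h)
    (hrel : ∀ z : ℂ, q₁ z ≠ 0 →
      h z = q z / q₁ z - 1 / (q₁ z * Complex.exp (-(g₁ z)))) :
    letI g : ℂ → ℂ := fun z => q₁ z * Complex.exp (-(g₁ z))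
    Differentiable ℂ (PhiBL g₁ h g) ∧
    -- the image is exactly the complement of graph(s):
    Set.range (PhiBL g₁ h g) = {p : ℂ × ℂ | q₁ p.1 * p.2 ≠ q p.1} ∧
    -- the Jacobian determinant (here the fiberwise derivative) never vanishes:
    (∀ z w : ℂ, deriv (fun w' => (PhiBL g₁ h g (z, w')).2) w ≠ 0) := by
  refine ⟨PhiBL.differentiable g₁ h _ hh (hq₁.mul (hg₁.neg.cexp)), ?_, fun z w => ?_⟩
  · rw [PhiBL.range_eq]
    ext ⟨z, v⟩
    exact one_add_mul_sub_ne_zero_iff (exp_ne_zero _) (hnc z) (hrel z)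
  · rw [(PhiBL.hasDerivAt_snd g₁ h _ z w).deriv]
    exact neg_ne_zero.2 (exp_ne_zero _)

/-- `Φ` is a holomorphic map from `ℂ²` onto `ℂ² \ graph(s)` with nowhere
vanishing Jacobian determinant. -/
theorem stmt_2 (q q₁ g₁ h : ℂ → ℂ)
    (hq : Differentiable ℂ q) (hq₁ : Differentiable ℂ q₁) (hg₁ : Differentiable ℂ g₁)
    (hnc : ∀ z : ℂ, ¬(q z = 0 ∧ q₁ z = 0))
    (hh : Differentiable ℂ h)
    (hrel : ∀ z : ℂ, q₁ z ≠ 0 →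
      h z = q z / q₁ z - 1 / (q₁ z * Complex.exp (-(g₁ z)))) :
    letI g : ℂ → ℂ := fun z => q₁ z * Complex.exp (-(g₁ z))
    Differentiable ℂ (PhiBL g₁ h g) ∧
    -- the image is exactly the complement of graph(s):
    Set.range (PhiBL g₁ h g) = {p : ℂ × ℂ | q₁ p.1 * p.2 ≠ q p.1} ∧
    -- the Jacobian determinant (here the fiberwise derivative) never vanishes:
    (∀ z w : ℂ, deriv (fun w' => (PhiBL g₁ h g (z, w')).2) w ≠ 0) :=
  stmt_2_general q q₁ g₁ h hq₁ hg₁ hnc hh hrel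
end

section
/- Let a, b, c be entire functions on ℂ and u entire. The vector field W^u(z,w) = e^{u(z)}(a(z)w² + b(z)w + c(z)) ∂/∂w on ℂ × ℙ¹ extends to a holomorphic vector field on ℂ × ℙ¹ that vanishes exactly on the double section D = {(z,w) : a(z)w² + b(z)w + c(z) = 0} (including points at infinity when a(z) = 0), and W^u is complete on (ℂ × ℙ¹) \ D. -/
open Complex

/-!
In homogeneous coordinates `w = W₀ / W₁` the field `e (a w² + b w + c) ∂/∂w` over a fixed
point `z₀`, with `e = exp (u z₀)`, lifts to the linear system `W' = e M W` with
`M = [[b/2, c], [-a, -b/2]]`, whose solutions `t ↦ exp (t e M) W(0)` exist for all complex time.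
`M` is the Hamiltonian matrix of the binary form `Q(W) = a W₀² + b W₀ W₁ + c W₁²`, so `Q` is a
first integral: a solution starting off `D`, i.e. with `Q ≠ 0`, stays off `D` and never passes
through `(0, 0)`.
-/

section LinearFlow

variable {𝕜 E : Type*} [RCLike 𝕜] [NormedAddCommGroup E] [NormedSpace 𝕜 E]
  [CompleteSpace E]

theorem hasDerivAt_exp_smul_apply (A : E →L[𝕜] E) (x : E) (t : 𝕜) :
    HasDerivAt (fun s : 𝕜 => NormedSpace.exp (s • A) x)
      (A (NormedSpace.exp (t • A) x)) t := by
  simpa using (hasDerivAt_exp_smul_const' A t).clm_apply (hasDerivAt_const t x)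

theorem exists_forall_hasDerivAt_clm (A : E →L[𝕜] E) (x : E) :
    ∃ W : 𝕜 → E, W 0 = x ∧ ∀ t, HasDerivAt W (A (W t)) t :=
  ⟨fun s => NormedSpace.exp (s • A) x, by simp, hasDerivAt_exp_smul_apply A x⟩

end LinearFlow

section BinaryQuadratic

variable {𝕜 : Type*} [RCLike 𝕜]

theorem exists_forall_hasDerivAt_hamiltonian (e a b c w₀ w₁ : 𝕜) :
    ∃ W₀ W₁ : 𝕜 → 𝕜, W₀ 0 = w₀ ∧ W₁ 0 = w₁ ∧
      (∀ t, HasDerivAt W₀ (e * (b / 2 * W₀ t + c * W₁ t)) t) ∧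
      (∀ t, HasDerivAt W₁ (e * (-a * W₀ t - b / 2 * W₁ t)) t) := by
  let A : 𝕜 × 𝕜 →L[𝕜] 𝕜 × 𝕜 :=
    ((e * (b / 2)) • ContinuousLinearMap.fst 𝕜 𝕜 𝕜
        + (e * c) • ContinuousLinearMap.snd 𝕜 𝕜 𝕜).prod
      ((-(e * a)) • ContinuousLinearMap.fst 𝕜 𝕜 𝕜
        + (-(e * (b / 2))) • ContinuousLinearMap.snd 𝕜 𝕜 𝕜)
  obtain ⟨W, hW0, hW⟩ := exists_forall_hasDerivAt_clm A (w₀, w₁)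
  refine ⟨fun t => (W t).1, fun t => (W t).2, by simp [hW0], by simp [hW0],
    fun t => ?_, fun t => ?_⟩
  · refine (ContinuousLinearMap.fst 𝕜 𝕜 𝕜).hasFDerivAt.comp_hasDerivAt t (hW t)
      |>.congr_deriv ?_
    simp [A]
    ring
  · refine (ContinuousLinearMap.snd 𝕜 𝕜 𝕜).hasFDerivAt.comp_hasDerivAt t (hW t)
      |>.congr_deriv ?_
    simp [A]
    ring

theorem quadratic_eq_of_hasDerivAt_hamiltonian {e a b c : 𝕜} {W₀ W₁ : 𝕜 → 𝕜}
    (h₀ : ∀ t, HasDerivAt W₀ (e * (b / 2 * W₀ t + c * W₁ t)) t)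
    (h₁ : ∀ t, HasDerivAt W₁ (e * (-a * W₀ t - b / 2 * W₁ t)) t) (s t : 𝕜) :
    a * W₀ s ^ 2 + b * W₀ s * W₁ s + c * W₁ s ^ 2 =
      a * W₀ t ^ 2 + b * W₀ t * W₁ t + c * W₁ t ^ 2 := by
  have hQ : ∀ t,
      HasDerivAt (fun t => a * W₀ t ^ 2 + b * W₀ t * W₁ t + c * W₁ t ^ 2) 0 t := by
    intro t
    refine (((h₀ t).fun_pow 2).const_mul a).fun_add (((h₀ t).const_mul b).fun_mul (h₁ t))
      |>.fun_add (((h₁ t).fun_pow 2).const_mul c) |>.congr_deriv ?_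
    push_cast
    ring
  exact is_const_of_deriv_eq_zero (fun t => (hQ t).differentiableAt) (fun t => (hQ t).deriv) s t

end BinaryQuadratic

theorem stmt_7_general (a b c u : ℂ → ℂ) :
    -- vanishing at finite points is exactly on D
    (∀ z w : ℂ, Complex.exp (u z) * (a z * w ^ 2 + b z * w + c z) = 0 ↔
        a z * w ^ 2 + b z * w + c z = 0) ∧
    -- the chart-at-infinity expression is holomorphic and vanishes at ∞ over z iff a z = 0
    ((∀ z : ℂ, Differentiable ℂ
        (fun v : ℂ => -Complex.exp (u z) * (c z * v ^ 2 + b z * v + a z))) ∧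
      (∀ z : ℂ, -Complex.exp (u z) * (c z * (0 : ℂ) ^ 2 + b z * 0 + a z) = 0 ↔ a z = 0)) ∧
    -- completeness on the complement of D, in homogeneous coordinates
    (∀ z₀ w₀ : ℂ, a z₀ * w₀ ^ 2 + b z₀ * w₀ + c z₀ ≠ 0 →
      ∃ W₀ W₁ : ℂ → ℂ, W₀ 0 = w₀ ∧ W₁ 0 = 1 ∧
        (∀ t : ℂ, (W₀ t, W₁ t) ≠ (0, 0)) ∧
        (∀ t : ℂ, HasDerivAt W₀
          (Complex.exp (u z₀) * (b z₀ / 2 * W₀ t + c z₀ * W₁ t)) t) ∧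
        (∀ t : ℂ, HasDerivAt W₁
          (Complex.exp (u z₀) * (-(a z₀) * W₀ t - b z₀ / 2 * W₁ t)) t) ∧
        (∀ t : ℂ, a z₀ * W₀ t ^ 2 + b z₀ * W₀ t * W₁ t + c z₀ * W₁ t ^ 2 ≠ 0)) := by
  refine ⟨fun z w => by simp [exp_ne_zero],
    ⟨fun z => by fun_prop, fun z => by simp [exp_ne_zero]⟩, fun z₀ w₀ hD => ?_⟩
  obtain ⟨W₀, W₁, hW₀, hW₁, h₀, h₁⟩ :=
    exists_forall_hasDerivAt_hamiltonian (exp (u z₀)) (a z₀) (b z₀) (c z₀) w₀ 1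
  have hQ : ∀ t, a z₀ * W₀ t ^ 2 + b z₀ * W₀ t * W₁ t + c z₀ * W₁ t ^ 2 ≠ 0 := fun t => by
    rw [quadratic_eq_of_hasDerivAt_hamiltonian h₀ h₁ t 0, hW₀, hW₁]
    simpa using hD
  refine ⟨W₀, W₁, hW₀, hW₁, fun t hzero => hQ t ?_, h₀, h₁, hQ⟩
  obtain ⟨h0, h1⟩ := Prod.mk.inj hzero
  simp [h0, h1]

/-- the vector field `W^u(z,w) = e^{u(z)}(a(z)w² + b(z)w + c(z)) ∂/∂w`
extends holomorphically to `ℂ × ℙ¹`, vanishing exactly on the double section `D`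
(in the chart `v = 1/w` at infinity it reads `-e^{u(z)}(c(z)v² + b(z)v + a(z)) ∂/∂v`,
so it vanishes at infinity over `z` iff `a(z) = 0`), and `W^u` is complete on
`(ℂ × ℙ¹) \ D`: in homogeneous coordinates `w = W₀/W₁` the flow is given by the global
solutions of a linear system, which stay off `D`. -/
theorem stmt_7 (a b c u : ℂ → ℂ)
    (ha : Differentiable ℂ a) (hb : Differentiable ℂ b) (hc : Differentiable ℂ c)
    (hu : Differentiable ℂ u) :
    -- vanishing at finite points is exactly on D
    (∀ z w : ℂ, Complex.exp (u z) * (a z * w ^ 2 + b z * w + c z) = 0 ↔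
        a z * w ^ 2 + b z * w + c z = 0) ∧
    -- the chart-at-infinity expression is holomorphic and vanishes at ∞ over z iff a z = 0
    ((∀ z : ℂ, Differentiable ℂ
        (fun v : ℂ => -Complex.exp (u z) * (c z * v ^ 2 + b z * v + a z))) ∧
      (∀ z : ℂ, -Complex.exp (u z) * (c z * (0 : ℂ) ^ 2 + b z * 0 + a z) = 0 ↔ a z = 0)) ∧
    -- completeness on the complement of D, in homogeneous coordinates
    (∀ z₀ w₀ : ℂ, a z₀ * w₀ ^ 2 + b z₀ * w₀ + c z₀ ≠ 0 →
      ∃ W₀ W₁ : ℂ → ℂ, W₀ 0 = w₀ ∧ W₁ 0 = 1 ∧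
        (∀ t : ℂ, (W₀ t, W₁ t) ≠ (0, 0)) ∧
        (∀ t : ℂ, HasDerivAt W₀
          (Complex.exp (u z₀) * (b z₀ / 2 * W₀ t + c z₀ * W₁ t)) t) ∧
        (∀ t : ℂ, HasDerivAt W₁
          (Complex.exp (u z₀) * (-(a z₀) * W₀ t - b z₀ / 2 * W₁ t)) t) ∧
        (∀ t : ℂ, a z₀ * W₀ t ^ 2 + b z₀ * W₀ t * W₁ t + c z₀ * W₁ t ^ 2 ≠ 0)) :=
  stmt_7_general a b c u
end

section
/- A Riemann surface of the form ℂ minus a finite nonempty set of k ≥ 2 points admits no complete holomorphic vector field that is not identically zero. Consequently, if a meromorphic function s on ℂ has at least two poles, there is no complete holomorphic vector field on ℂ² tangent to graph(s) and not identically zero on graph(s). -/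
/-!
An orbit `t ↦ φ t z` of a complete holomorphic vector field is an entire function, and by
uniqueness of solutions two times at which it takes the same value differ by a period. So a
nonconstant orbit is injective, doubly periodic, or factors through `t ↦ exp (2πit/T)` as an
injective holomorphic function on `ℂ*`. A doubly periodic entire function is bounded, hence
constant. An injective holomorphic function on `ℂ*` omits an open set near each end (open mapping
theorem), so it has a removable singularity or a pole at `0` and at `∞`; Liouville's theorem then
shows that it cannot omit two values. Hence an orbit avoiding two points is constant and the field
vanishes along it. For a field on `ℂ²` tangent to the graph of `s`, the first coordinate of an orbit
is an orbit of a holomorphic field on `ℂ` minus the poles of `s`.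
-/

open Complex

/-- The graph of the meromorphic function `s = q/q₁` over the points where it is finite. -/
def grph (q q₁ : ℂ → ℂ) : Set (ℂ × ℂ) :=
  {p : ℂ × ℂ | q₁ p.1 ≠ 0 ∧ q₁ p.1 * p.2 = q p.1}

open Filter Topology Set Function Bornology Metric

theorem Complex.differentiable_update_of_tendsto {g : ℂ → ℂ} {z₀ c : ℂ}
    (hg : DifferentiableOn ℂ g {z₀}ᶜ) (hc : Tendsto g (𝓝[≠] z₀) (𝓝 c)) :
    Differentiable ℂ (update g z₀ c) := by
  have hoff : ∀ w ≠ z₀, DifferentiableAt ℂ (update g z₀ c) w := fun w hw =>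
    ((hg w hw).differentiableAt (isOpen_compl_singleton.mem_nhds hw)).congr_of_eventuallyEq
      ((update_eventuallyEq g z₀ c).filter_mono
        (le_principal_iff.mpr (isOpen_compl_singleton.mem_nhds hw)))
  intro w
  rcases eq_or_ne w z₀ with rfl | hw
  · exact (analyticAt_of_differentiable_on_punctured_nhds_of_continuousAt
      (eventually_nhdsWithin_of_forall hoff) (continuousAt_update_same.mpr hc)).differentiableAt
  · exact hoff w hw

theorem Complex.tendsto_or_tendsto_cobounded_of_eventually_notMem_ball {g : ℂ → ℂ} {z₀ c : ℂ}
    {δ : ℝ} (hδ : 0 < δ) (hg : ∀ᶠ w in 𝓝[≠] z₀, DifferentiableAt ℂ g w)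
    (hc : ∀ᶠ w in 𝓝[≠] z₀, g w ∉ ball c δ) :
    (∃ L, Tendsto g (𝓝[≠] z₀) (𝓝 L)) ∨ Tendsto g (𝓝[≠] z₀) (cobounded ℂ) := by
  have hne : ∀ᶠ w in 𝓝[≠] z₀, g w - c ≠ 0 := hc.mono fun w hw h0 =>
    hw (by simpa [mem_ball, dist_eq, h0] using hδ)
  set h : ℂ → ℂ := fun w => (g w - c)⁻¹
  have hh : ∀ᶠ w in 𝓝[≠] z₀, DifferentiableAt ℂ h w :=
    (hg.and hne).mono fun w hw => (hw.1.sub_const c).inv hw.2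
  have hbdd : IsBoundedUnder (· ≤ ·) (𝓝[≠] z₀) fun w => ‖h w - h z₀‖ := by
    refine ⟨δ⁻¹ + ‖h z₀‖, eventually_map.mpr (hc.mono fun w hw => ?_)⟩
    have : δ ≤ ‖g w - c‖ := by simpa [mem_ball, dist_eq] using hw
    calc ‖h w - h z₀‖ ≤ ‖h w‖ + ‖h z₀‖ := norm_sub_le _ _
      _ ≤ δ⁻¹ + ‖h z₀‖ := by
        gcongr
        simpa [h, norm_inv] using inv_anti₀ hδ this
  have hlim := tendsto_limUnder_of_differentiable_on_punctured_nhds_of_bounded_under hh hbdd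
  set L := limUnder (𝓝[≠] z₀) h
  have hg_eq : (fun w => (h w)⁻¹ + c) =ᶠ[𝓝[≠] z₀] g := hne.mono fun w _ => by simp [h]
  rcases eq_or_ne L 0 with hL | hL
  · right
    have hh0 : Tendsto h (𝓝[≠] z₀) (𝓝[≠] 0) :=
      tendsto_nhdsWithin_iff.mpr ⟨hL ▸ hlim, hne.mono fun w hw => inv_ne_zero hw⟩
    exact ((tendsto_add_const_cobounded c).comp (tendsto_inv₀_nhdsNE_zero.comp hh0)).congr' hg_eq
  · exact Or.inl ⟨L⁻¹ + c, ((hlim.inv₀ hL).add_const c).congr' hg_eq⟩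

theorem Complex.exists_eventually_notMem_ball_of_injOn {g : ℂ → ℂ} {z₀ : ℂ}
    (hg : DifferentiableOn ℂ g {z₀}ᶜ) (hinj : InjOn g {z₀}ᶜ) :
    ∃ c, ∃ δ > 0, ∀ᶠ w in 𝓝[≠] z₀, g w ∉ ball c δ := by
  set U := ball (z₀ + 1) (1 / 2)
  have hU : U ⊆ {z₀}ᶜ := fun w hw (h : w = z₀) => by
    simp [U, h, mem_ball] at hw; norm_num at hw
  have hz₁ : z₀ + 1 ∈ U := mem_ball_self (by norm_num)
  have hopen : IsOpen (g '' U) := by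
    rcases ((hg.mono hU).analyticOnNhd isOpen_ball).is_constant_or_isOpen
      (convex_ball _ _).isPreconnected with ⟨c, hc⟩ | hopen
    · have hz₂ : z₀ + 1 + 1 / 4 ∈ U := by simp [U, mem_ball]; norm_num
      have := hinj (hU hz₁) (hU hz₂) ((hc _ hz₁).trans (hc _ hz₂).symm)
      norm_num at this
    · exact hopen U subset_rfl isOpen_ball
  obtain ⟨δ, hδ, hball⟩ := isOpen_iff.mp hopen (g (z₀ + 1)) (mem_image_of_mem g hz₁)
  refine ⟨g (z₀ + 1), δ, hδ, ?_⟩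
  filter_upwards [self_mem_nhdsWithin, nhdsWithin_le_nhds (ball_mem_nhds z₀ one_half_pos)]
    with w hw₀ hw hgw
  obtain ⟨u, hu, hgu⟩ := hball hgw
  obtain rfl := hinj (hU hu) hw₀ hgu
  have h₁ : dist (z₀ + 1) z₀ = 1 := by simp
  have := dist_triangle_left (z₀ + 1) z₀ u
  simp only [U, mem_ball] at hu hw
  linarith

theorem Complex.tendsto_or_tendsto_cobounded_of_injOn {g : ℂ → ℂ} {z₀ : ℂ}
    (hg : DifferentiableOn ℂ g {z₀}ᶜ) (hinj : InjOn g {z₀}ᶜ) :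
    (∃ L, Tendsto g (𝓝[≠] z₀) (𝓝 L)) ∨ Tendsto g (𝓝[≠] z₀) (cobounded ℂ) := by
  obtain ⟨c, δ, hδ, hc⟩ := exists_eventually_notMem_ball_of_injOn hg hinj
  exact tendsto_or_tendsto_cobounded_of_eventually_notMem_ball hδ
    (eventually_nhdsWithin_of_forall fun w hw =>
      hg.differentiableAt (isOpen_compl_singleton.mem_nhds hw)) hc

theorem Complex.tendsto_or_tendsto_cobounded_of_injOn_cobounded {g : ℂ → ℂ}
    (hg : DifferentiableOn ℂ g {0}ᶜ) (hinj : InjOn g {0}ᶜ) :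
    (∃ L, Tendsto g (cobounded ℂ) (𝓝 L)) ∨ Tendsto g (cobounded ℂ) (cobounded ℂ) := by
  have hinv : ∀ l, Tendsto (g ∘ Inv.inv) (𝓝[≠] 0) l ↔ Tendsto g (cobounded ℂ) l := fun l => by
    rw [← inv_nhdsNE_zero, ← Filter.map_inv, tendsto_map'_iff]
  have hmaps : MapsTo Inv.inv ({0}ᶜ : Set ℂ) {0}ᶜ := fun w hw => inv_ne_zero hw
  simpa only [hinv] using tendsto_or_tendsto_cobounded_of_injOn
    (hg.comp (differentiableOn_inv (𝕜 := ℂ)) hmaps) (hinj.comp inv_injective.injOn hmaps)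

theorem Complex.not_injOn_of_tendsto_of_forall_ne {g : ℂ → ℂ} {a b c₀ : ℂ} (hab : a ≠ b)
    (hg : DifferentiableOn ℂ g {0}ᶜ) (ha : ∀ w ≠ 0, g w ≠ a) (hb : ∀ w ≠ 0, g w ≠ b)
    (h₀ : Tendsto g (𝓝[≠] 0) (𝓝 c₀)) : ¬InjOn g {0}ᶜ := by
  intro hinj
  rcases tendsto_or_tendsto_cobounded_of_injOn_cobounded hg hinj with ⟨d, hd⟩ | hinf
  · have hG := differentiable_update_of_tendsto hg h₀
    have hGd : Tendsto (update g 0 c₀) (cocompact ℂ) (𝓝 d) := by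
      rw [← cobounded_eq_cocompact]
      exact hd.congr' ((eventually_ne_cobounded 0).mono fun w hw => (update_of_ne hw _ _).symm)
    have h₁₂ := (hG.apply_eq_of_tendsto_cocompact 1 hGd).trans
      (hG.apply_eq_of_tendsto_cocompact 2 hGd).symm
    rw [update_of_ne one_ne_zero, update_of_ne two_ne_zero] at h₁₂
    have := hinj one_ne_zero two_ne_zero h₁₂
    norm_num at this
  · obtain ⟨e, he, hc₀e⟩ : ∃ e, (∀ w ≠ 0, g w ≠ e) ∧ c₀ ≠ e := by
      by_cases h : c₀ = a
      exacts [⟨b, hb, h ▸ hab⟩, ⟨a, ha, h⟩]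
    set k : ℂ → ℂ := fun w => (g w - e)⁻¹
    have hk : DifferentiableOn ℂ k {0}ᶜ := fun w hw =>
      ((hg w hw).sub_const e).inv (sub_ne_zero.mpr (he w hw))
    have hK := differentiable_update_of_tendsto hk ((h₀.sub_const e).inv₀ (sub_ne_zero.mpr hc₀e))
    have hK0 : Tendsto (update k 0 (c₀ - e)⁻¹) (cocompact ℂ) (𝓝 0) := by
      rw [← cobounded_eq_cocompact]
      exact (tendsto_inv₀_cobounded.comp ((tendsto_sub_const_cobounded e).comp hinf)).congr'
        ((eventually_ne_cobounded 0).mono fun w hw => (update_of_ne hw _ _).symm)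
    have := hK.apply_eq_of_tendsto_cocompact 1 hK0
    simp [k, sub_eq_zero, he 1 one_ne_zero] at this

theorem Complex.not_injOn_of_forall_ne {g : ℂ → ℂ} {a b : ℂ} (hab : a ≠ b)
    (hg : DifferentiableOn ℂ g {0}ᶜ) (ha : ∀ w ≠ 0, g w ≠ a) (hb : ∀ w ≠ 0, g w ≠ b) :
    ¬InjOn g {0}ᶜ := by
  intro hinj
  rcases tendsto_or_tendsto_cobounded_of_injOn hg hinj with ⟨c₀, h₀⟩ | hinf
  · exact not_injOn_of_tendsto_of_forall_ne hab hg ha hb h₀ hinj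
  -- at a pole of `g`, the function `(g - a)⁻¹` has a finite limit instead
  · have hk : DifferentiableOn ℂ (fun w => (g w - a)⁻¹) {0}ᶜ := fun w hw =>
      ((hg w hw).sub_const a).inv (sub_ne_zero.mpr (ha w hw))
    refine not_injOn_of_tendsto_of_forall_ne (inv_ne_zero (sub_ne_zero.mpr hab.symm)).symm hk
      (fun w hw => inv_ne_zero (sub_ne_zero.mpr (ha w hw)))
      (fun w hw h => hb w hw (by simpa using h))
      (tendsto_inv₀_cobounded.comp ((tendsto_sub_const_cobounded a).comp hinf))
      fun x hx y hy hxy => hinj hx hy (by simpa using hxy)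

theorem Complex.not_injective_of_forall_ne {f : ℂ → ℂ} {a : ℂ} (hf : Differentiable ℂ f)
    (ha : ∀ t, f t ≠ a) : ¬Injective f := fun hinj =>
  not_injOn_of_forall_ne (ha 0).symm hf.differentiableOn (fun w _ => ha w)
    (fun _ hw h => hw (hinj h)) hinj.injOn

theorem Complex.eq_of_eventuallyEq_ofReal {F G : ℂ → ℂ} (hF : Differentiable ℂ F)
    (hG : Differentiable ℂ G) {x₀ : ℝ} (h : (fun x : ℝ => F x) =ᶠ[𝓝 x₀] fun x => G x) :
    F = G :=
  (analyticOnNhd_univ_iff_differentiable.mpr hF).eq_of_frequently_eq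
    (analyticOnNhd_univ_iff_differentiable.mpr hG)
    ((continuous_ofReal.continuousWithinAt.tendsto_nhdsWithin (s := {x₀}ᶜ) (t := {(x₀ : ℂ)}ᶜ)
      fun _ hx => by simpa using hx).frequently
      (h.filter_mono nhdsWithin_le_nhds).frequently)

theorem Complex.periodic_sub_of_hasDerivAt_of_eq {V f : ℂ → ℂ}
    (hV : ∀ t, ContDiffAt ℝ 1 V (f t)) (hf : ∀ t, HasDerivAt f (V (f t)) t) {t₁ t₂ : ℂ}
    (h : f t₁ = f t₂) : Periodic f (t₂ - t₁) := by
  have hshift : ∀ t₀ (x : ℝ), HasDerivAt (fun x : ℝ => f (t₀ + x)) (V (f (t₀ + x))) x :=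
    fun t₀ x => ((hf (t₀ + x)).comp_const_add t₀ x).comp_ofReal
  obtain ⟨K, s, hs, hK⟩ := (hV t₁).exists_lipschitzOnWith
  have hsol : ∀ t₀, f t₀ = f t₁ →
      ∀ᶠ x : ℝ in 𝓝 0, HasDerivAt (fun x : ℝ => f (t₀ + x)) (V (f (t₀ + x))) x ∧
        f (t₀ + x) ∈ s := by
    intro t₀ ht₀
    have hcont := (hshift t₀ 0).continuousAt.tendsto
    simp only [ofReal_zero, add_zero, ht₀] at hcont
    exact (hcont.eventually_mem hs).mono fun x hx => ⟨hshift t₀ x, hx⟩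
  have hloc := ODE_solution_unique_of_eventually (v := fun _ => V) (s := fun _ => s)
    (Eventually.of_forall fun _ => hK) (hsol t₁ rfl) (hsol t₂ h.symm) (by simp [h])
  have hent : Differentiable ℂ f := fun t => (hf t).differentiableAt
  have hdiff : ∀ t₀, Differentiable ℂ fun t => f (t₀ + t) := fun t₀ =>
    hent.comp (differentiable_id.const_add t₀)
  have hglob := eq_of_eventuallyEq_ofReal (hdiff t₁) (hdiff t₂) hloc
  intro x
  simpa [add_sub_left_comm] using (congrFun hglob (x - t₁)).symm

def Function.periods {α β : Type*} [AddCommGroup α] (f : α → β) : AddSubgroup α where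
  carrier := {c | Periodic f c}
  zero_mem' := by simp [Periodic]
  add_mem' := Periodic.add_period
  neg_mem' := Periodic.neg

theorem Function.mem_periods {α β : Type*} [AddCommGroup α] {f : α → β} {c : α} :
    c ∈ periods f ↔ Periodic f c :=
  Iff.rfl

theorem Complex.eq_of_frequently_periodic {f : ℂ → ℂ} (hf : Differentiable ℂ f)
    (h : ∃ᶠ T in 𝓝[≠] 0, Periodic f T) (s t : ℂ) : f s = f t := by
  have hshift : (fun T => f (t + T)) = fun _ => f t :=
    (analyticOnNhd_univ_iff_differentiable.mpr
      (hf.comp (differentiable_id.const_add t))).eq_of_frequently_eq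
      analyticOnNhd_const (h.mono fun T hT => hT t)
  simpa using congrFun hshift (s - t)

theorem PeriodPair.isBounded_range_of_periodic {α : Type*} [PseudoMetricSpace α] {f : ℂ → α}
    (L : PeriodPair) (hf : Continuous f) (h₁ : Periodic f L.ω₁) (h₂ : Periodic f L.ω₂) :
    IsBounded (range f) := by
  have hper : ∀ x ∈ L.lattice, Periodic f x := by
    intro x hx
    obtain ⟨m, n, rfl⟩ := PeriodPair.mem_lattice.mp hx
    exact (h₁.int_mul m).add_period (h₂.int_mul n)
  refine ((isCompact_closedBall 0 (∑ i, ‖L.basis i‖)).image hf).isBounded.subset ?_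
  rintro _ ⟨z, rfl⟩
  refine ⟨ZSpan.fract L.basis z, by simpa using ZSpan.norm_fract_le L.basis z, ?_⟩
  have hfloor : (ZSpan.floor L.basis z : ℂ) ∈ L.lattice := by
    rw [L.lattice_eq_span_range_basis]
    exact (ZSpan.floor L.basis z).2
  rw [ZSpan.fract_apply, ← hper _ hfloor, sub_add_cancel]

theorem AddSubgroup.exists_eq_zmultiples_of_forall_exists_smul_eq (Γ : AddSubgroup ℂ)
    (hdisc : ¬∃ᶠ T in 𝓝[≠] 0, T ∈ Γ) {T₀ : ℂ} (hT₀ : T₀ ∈ Γ) (hT₀0 : T₀ ≠ 0)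
    (hline : ∀ T ∈ Γ, ∃ x : ℝ, x • T₀ = T) : ∃ T₁ ≠ 0, Γ = zmultiples T₁ := by
  set ι : ℝ →+ ℂ := (LinearMap.toSpanSingleton ℝ ℂ T₀).toAddMonoidHom
  have hι : ∀ x, ι x = x • T₀ := fun _ => rfl
  rcases (Γ.comap ι).dense_or_cyclic with hdense | ⟨a, ha⟩
  · have hS : ∃ᶠ x in 𝓝[≠] (0 : ℝ), x ∈ Γ.comap ι :=
      mem_closure_ne_iff_frequently_within.mp
        ((hdense.sdiff_singleton 0).closure_eq ▸ mem_univ 0)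
    have hιt : Tendsto ι (𝓝[≠] 0) (𝓝[≠] 0) := by
      refine tendsto_nhdsWithin_of_tendsto_nhds_of_eventually_within _ ?_ ?_
      · exact ((by fun_prop : Continuous fun x : ℝ => x • T₀).tendsto' 0 0
          (zero_smul ℝ T₀)).mono_left nhdsWithin_le_nhds
      · filter_upwards [self_mem_nhdsWithin] with x hx
        simpa [hι, hT₀0] using hx
    exact (hdisc (hιt.frequently hS)).elim
  · have hmem : ∀ x, x ∈ Γ.comap ι ↔ ∃ n : ℤ, n • a = x := fun x => by
      rw [ha, AddSubgroup.mem_closure_singleton]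
    obtain ⟨n, hn⟩ := (hmem 1).mp (by simpa [hι] using hT₀)
    refine ⟨a • T₀, fun h => by simp_all, le_antisymm (fun T hT => ?_) ?_⟩
    · obtain ⟨x, rfl⟩ := hline T hT
      obtain ⟨m, rfl⟩ := (hmem x).mp (by simpa [hι] using hT)
      exact ⟨m, by simp [mul_smul]⟩
    · exact (zmultiples_le_of_mem ((hmem a).mpr ⟨1, one_zsmul a⟩ : a ∈ Γ.comap ι))

open Function.Periodic in
theorem Complex.not_injective_lift_of_forall_ne {f : ℂ → ℂ} {T a b : ℂ} (hf : Differentiable ℂ f)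
    (hT : Periodic f T) (hT0 : T ≠ 0) (hab : a ≠ b) (ha : ∀ t, f t ≠ a) (hb : ∀ t, f t ≠ b) :
    ¬Injective hT.lift := by
  intro hinj
  -- `cuspFunction 1 F` is `f` read as a function of `exp (2πit/T)` on `ℂ*`
  set F : ℂ → ℂ := fun t => f (T * t)
  have hF : Periodic F 1 := fun t => by simpa [F, mul_add] using hT (T * t)
  have hg : ∀ q ≠ 0, cuspFunction 1 F q = F (invQParam 1 q) := fun q hq =>
    cuspFunction_eq_of_nonzero 1 F hq
  refine not_injOn_of_forall_ne hab (g := cuspFunction 1 F) ?_ (fun q hq => hg q hq ▸ ha _)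
    (fun q hq => hg q hq ▸ hb _) ?_
  · intro q hq
    rw [← qParam_right_inv one_ne_zero hq]
    exact (differentiableAt_cuspFunction one_ne_zero hF
      ((hf.comp (differentiable_id.const_mul T)) _)).differentiableWithinAt
  · intro q₁ hq₁ q₂ hq₂ hq
    rw [hg q₁ hq₁, hg q₂ hq₂] at hq
    have hcoe : ((T * invQParam 1 q₁ : ℂ) : ℂ ⧸ AddSubgroup.zmultiples T) =
        (T * invQParam 1 q₂ : ℂ) := hinj (by simpa [Periodic.lift_coe] using hq)
    obtain ⟨n, hn⟩ := AddSubgroup.mem_zmultiples_iff.mp (QuotientAddGroup.eq.mp hcoe)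
    have hz : invQParam 1 q₂ = invQParam 1 q₁ + n := by
      apply mul_left_cancel₀ hT0
      linear_combination (-1 : ℂ) * hn
    rw [← qParam_right_inv one_ne_zero hq₁, ← qParam_right_inv one_ne_zero hq₂, hz]
    simp [qParam, mul_add, exp_add, mul_comm _ (n : ℂ), exp_int_mul_two_pi_mul_I]

theorem Complex.apply_eq_apply_of_hasDerivAt_of_forall_ne {V f : ℂ → ℂ}
    (hV : ∀ t, ContDiffAt ℝ 1 V (f t)) (hf : ∀ t, HasDerivAt f (V (f t)) t) {a b : ℂ}
    (hab : a ≠ b) (ha : ∀ t, f t ≠ a) (hb : ∀ t, f t ≠ b) (s t : ℂ) : f s = f t := by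
  have hent : Differentiable ℂ f := fun t => (hf t).differentiableAt
  by_contra hst
  have hcoinc : ∀ {x y}, f x = f y → y - x ∈ periods f := fun hxy =>
    periodic_sub_of_hasDerivAt_of_eq hV hf hxy
  have hdisc : ¬∃ᶠ T in 𝓝[≠] 0, T ∈ periods f := fun h => hst (eq_of_frequently_periodic hent h s t)
  by_cases htriv : ∀ T ∈ periods f, T = 0
  · exact not_injective_of_forall_ne hent ha fun x y hxy =>
      (sub_eq_zero.mp (htriv _ (hcoinc hxy))).symm
  push Not at htriv
  obtain ⟨T₀, hT₀, hT₀0⟩ := htriv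
  by_cases hpair : ∃ T₁ ∈ periods f, LinearIndependent ℝ ![T₁, T₀]
  · obtain ⟨T₁, hT₁, hind⟩ := hpair
    exact hst (hent.apply_eq_apply_of_bounded
      ((PeriodPair.mk T₁ T₀ hind).isBounded_range_of_periodic hent.continuous hT₁ hT₀) s t)
  push Not at hpair
  have hline : ∀ T ∈ periods f, ∃ x : ℝ, x • T₀ = T := fun T hT => by
    simpa [linearIndependent_fin2, hT₀0] using hpair T hT
  obtain ⟨T, hT0, hΓ⟩ :=
    (periods f).exists_eq_zmultiples_of_forall_exists_smul_eq hdisc hT₀ hT₀0 hline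
  have hT : Periodic f T := mem_periods.mp (hΓ ▸ AddSubgroup.mem_zmultiples T)
  refine not_injective_lift_of_forall_ne hent hT hT0 hab ha hb ?_
  rintro ⟨x⟩ ⟨y⟩ hxy
  exact QuotientAddGroup.eq.mpr (by simpa [hΓ, neg_add_eq_sub] using hcoinc hxy)

theorem Complex.apply_eq_apply_of_hasDerivAt_of_nontrivial_compl {U : Set ℂ} (hU : IsOpen U)
    (hUc : Uᶜ.Nontrivial) {V f : ℂ → ℂ} (hV : DifferentiableOn ℂ V U) (hfU : ∀ t, f t ∈ U)
    (hf : ∀ t, HasDerivAt f (V (f t)) t) (s t : ℂ) : f s = f t := by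
  obtain ⟨a, ha, b, hb, hab⟩ := hUc
  exact apply_eq_apply_of_hasDerivAt_of_forall_ne
    (fun t => ((hV.contDiffOn hU).contDiffAt (hU.mem_nhds (hfU t))).restrict_scalars ℝ) hf hab
    (fun t h => ha (h ▸ hfU t)) (fun t h => hb (h ▸ hfU t)) s t

theorem HasDerivAt.eq_zero_of_forall_eq {𝕜 F : Type*} [NontriviallyNormedField 𝕜]
    [NormedAddCommGroup F] [NormedSpace 𝕜 F] {f : 𝕜 → F} {f' : F} {x : 𝕜}
    (hf : HasDerivAt f f' x) (hc : ∀ t, f t = f x) : f' = 0 :=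
  hf.unique ((hasDerivAt_const x (f x)).congr_of_eventuallyEq (Eventually.of_forall hc))

theorem snd_eq_div_of_mem_grph {q q₁ : ℂ → ℂ} {p : ℂ × ℂ} (hp : p ∈ grph q q₁) :
    p.2 = q p.1 / q₁ p.1 :=
  eq_div_of_mul_eq hp.1 (by rw [mul_comm]; exact hp.2)

theorem stmt_9_general
    -- first part: ℂ minus a finite set of at least two points
    (P : Set ℂ) (hP2 : 2 ≤ P.ncard)
    (v : ℂ → ℂ) (hv : DifferentiableOn ℂ v Pᶜ)
    (φ : ℂ → ℂ → ℂ)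
    (hφ0 : ∀ z ∉ P, φ 0 z = z)
    (hφmem : ∀ z ∉ P, ∀ t : ℂ, φ t z ∉ P)
    (hφ : ∀ z ∉ P, ∀ t : ℂ, HasDerivAt (fun τ => φ τ z) (v (φ t z)) t)
    -- second part: a meromorphic function with at least two poles
    (q q₁ : ℂ → ℂ) (hq : Differentiable ℂ q) (hq₁ : Differentiable ℂ q₁)
    (hpoles : 2 ≤ ({z : ℂ | q₁ z = 0}).ncard)
    (X : ℂ × ℂ → ℂ × ℂ) (hX : Differentiable ℂ X)
    (Φ : ℂ → ℂ × ℂ → ℂ × ℂ)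
    (hΦ0 : ∀ p, Φ 0 p = p)
    (hΦ : ∀ p t, HasDerivAt (fun τ => Φ τ p) (X (Φ t p)) t)
    (htan : ∀ t p, p ∈ grph q q₁ → Φ t p ∈ grph q q₁) :
    (∀ z ∉ P, v z = 0) ∧ (∀ p ∈ grph q q₁, X p = 0) := by
  constructor
  · intro z hz
    obtain ⟨hPnt, hPfin⟩ := Set.one_lt_ncard_iff_nontrivial_and_finite.mp hP2
    have hconst := apply_eq_apply_of_hasDerivAt_of_nontrivial_compl
      hPfin.isClosed.isOpen_compl (by rwa [compl_compl]) hv (hφmem z hz) (hφ z hz)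
    simpa [hφ0 z hz] using (hφ z hz 0).eq_zero_of_forall_eq fun t => hconst t 0
  · intro p hp
    set V : ℂ → ℂ := fun x => (X (x, q x / q₁ x)).1
    set f : ℂ → ℂ := fun t => (Φ t p).1
    have hgraph : ∀ t, Φ t p = (f t, q (f t) / q₁ (f t)) := fun t =>
      Prod.ext rfl (snd_eq_div_of_mem_grph (htan t p hp))
    have hV : DifferentiableOn ℂ V {x | q₁ x = 0}ᶜ := fun x hx =>
      ((hX _).comp x (differentiableAt_id.prodMk ((hq x).div (hq₁ x) hx))).fst
        |>.differentiableWithinAt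
    have hf : ∀ t, HasDerivAt f (V (f t)) t := fun t => by
      have := (ContinuousLinearMap.fst ℂ ℂ ℂ).hasFDerivAt.comp_hasDerivAt t (hΦ p t)
      rwa [hgraph t] at this
    have hconst : ∀ s t, f s = f t := apply_eq_apply_of_hasDerivAt_of_nontrivial_compl
      (isClosed_eq hq₁.continuous continuous_const).isOpen_compl
      (by rw [compl_compl]; exact (Set.one_lt_ncard_iff_nontrivial_and_finite.mp hpoles).1)
      hV (fun t => (htan t p hp).1) hf
    have hΦconst : ∀ t, Φ t p = Φ 0 p := fun t => by rw [hgraph t, hgraph 0, hconst t 0]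
    simpa [hΦ0] using (hΦ p 0).eq_zero_of_forall_eq hΦconst

/-- `ℂ` minus `k ≥ 2` points carries no nonzero complete holomorphic vector
field; consequently if `s` has at least two poles there is no complete holomorphic
vector field on `ℂ²` tangent to `graph(s)` and not identically zero on `graph(s)`. -/
theorem stmt_9
    -- first part: ℂ minus a finite set of at least two points
    (P : Set ℂ) (hPfin : P.Finite) (hP2 : 2 ≤ P.ncard)
    (v : ℂ → ℂ) (hv : DifferentiableOn ℂ v Pᶜ)
    (φ : ℂ → ℂ → ℂ)
    (hφ0 : ∀ z ∉ P, φ 0 z = z)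
    (hφmem : ∀ z ∉ P, ∀ t : ℂ, φ t z ∉ P)
    (hφ : ∀ z ∉ P, ∀ t : ℂ, HasDerivAt (fun τ => φ τ z) (v (φ t z)) t)
    -- second part: a meromorphic function with at least two poles
    (q q₁ : ℂ → ℂ) (hq : Differentiable ℂ q) (hq₁ : Differentiable ℂ q₁)
    (hnc : ∀ z : ℂ, ¬(q z = 0 ∧ q₁ z = 0))
    (hpoles : 2 ≤ ({z : ℂ | q₁ z = 0}).ncard)
    (X : ℂ × ℂ → ℂ × ℂ) (hX : Differentiable ℂ X)
    (Φ : ℂ → ℂ × ℂ → ℂ × ℂ)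
    (hΦ0 : ∀ p, Φ 0 p = p)
    (hΦ : ∀ p t, HasDerivAt (fun τ => Φ τ p) (X (Φ t p)) t)
    (htan : ∀ t p, p ∈ grph q q₁ → Φ t p ∈ grph q q₁) :
    (∀ z ∉ P, v z = 0) ∧ (∀ p ∈ grph q q₁, X p = 0) :=
  stmt_9_general P hP2 v hv φ hφ0 hφmem hφ q q₁ hq hq₁ hpoles X hX Φ hΦ0 hΦ htan
end

section
/- Let s : ℂ → ℂ be entire and b ∈ ℂ*. The vector field X = φ_*(b ∂/∂x + A(x)t ∂/∂t), where φ(x,t) = (x, t + s(x)) and A is a nonzero polynomial, is a complete holomorphic vector field on ℂ² tangent to graph(s), all of whose trajectories are proper and biholomorphic to ℂ. -/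
/-!
Conjugating by the shear `φ(x, t) = (x, t + s x)` turns `X` into `b ∂/∂x + a(x) t ∂/∂t`, whose
flow is explicit once `a` has a primitive `F` (every entire function does):
`(x, t) ↦ (x + b τ, t · exp ((F (x + b τ) - F x) / b))`. Its trajectories are the graphs of
`x ↦ t₀ exp ((F x - F x₀) / b)` over the `x`-line, traversed by the affine parameter `x₀ + b τ`;
so they are injective images of `ℂ` and closed, and `{t = 0}`, i.e. `graph s` after the shear,
is invariant.
-/

open Complex

section ShearedFlow

variable (b : ℂ) (s a F : ℂ → ℂ)

/-- The push-forward of `b ∂/∂x + a(x) t ∂/∂t` by `(x, t) ↦ (x, t + s x)`. -/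
noncomputable def shearedField (p : ℂ × ℂ) : ℂ × ℂ :=
  (b, a p.1 * (p.2 - s p.1) + deriv s p.1 * b)

/-- The flow of `shearedField b s a`, given a primitive `F` of `a`. -/
noncomputable def shearedFlow (τ : ℂ) (p : ℂ × ℂ) : ℂ × ℂ :=
  (p.1 + b * τ, (p.2 - s p.1) * exp ((F (p.1 + b * τ) - F p.1) / b) + s (p.1 + b * τ))

variable {b s a F}

theorem differentiable_shearedField (ha : Differentiable ℂ a) (hs : Differentiable ℂ s) :
    Differentiable ℂ (shearedField b s a) :=
  (differentiable_const b).prodMk <|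
    ((ha.comp differentiable_fst).mul (differentiable_snd.sub (hs.comp differentiable_fst))).add
      ((hs.deriv.comp differentiable_fst).mul (differentiable_const b))

@[simp]
theorem shearedFlow_zero (p : ℂ × ℂ) : shearedFlow b s F 0 p = p := by
  simp [shearedFlow]

theorem hasDerivAt_shearedFlow (hb : b ≠ 0) (hs : Differentiable ℂ s)
    (hF : ∀ x, HasDerivAt F (a x) x) (p : ℂ × ℂ) (t : ℂ) :
    HasDerivAt (fun τ => shearedFlow b s F τ p) (shearedField b s a (shearedFlow b s F t p)) t := by
  have hx : HasDerivAt (fun τ : ℂ => p.1 + b * τ) b t := by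
    simpa using ((hasDerivAt_id t).const_mul b).const_add p.1
  have hexponent : HasDerivAt (fun τ : ℂ => (F (p.1 + b * τ) - F p.1) / b)
      (a (p.1 + b * t)) t := by
    have h := (((hF _).comp t hx).sub_const (F p.1)).div_const b
    rwa [mul_div_cancel_right₀ _ hb] at h
  have hs' : HasDerivAt (fun τ : ℂ => s (p.1 + b * τ)) (deriv s (p.1 + b * t) * b) t :=
    (hs _).hasDerivAt.comp t hx
  refine (hx.prodMk ((((hasDerivAt_exp _).comp t hexponent).const_mul (p.2 - s p.1)).add
    hs')).congr_deriv ?_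
  simp only [shearedField, shearedFlow]
  ext
  · rfl
  · simp only [add_sub_cancel_right]
    ring

theorem shearedFlow_snd_eq_of_snd_eq (t : ℂ) {p : ℂ × ℂ} (hp : p.2 = s p.1) :
    (shearedFlow b s F t p).2 = s (shearedFlow b s F t p).1 := by
  simp [shearedFlow, hp]

theorem shearedFlow_injective (hb : b ≠ 0) (p : ℂ × ℂ) :
    Function.Injective fun t => shearedFlow b s F t p := fun _ _ h =>
  mul_left_cancel₀ hb (add_left_cancel (congrArg Prod.fst h))

theorem range_shearedFlow (hb : b ≠ 0) (p : ℂ × ℂ) :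
    Set.range (fun t => shearedFlow b s F t p) =
      {q | q.2 = (p.2 - s p.1) * exp ((F q.1 - F p.1) / b) + s q.1} := by
  ext q
  constructor
  · rintro ⟨t, rfl⟩
    rfl
  · intro hq
    refine ⟨(q.1 - p.1) / b, Prod.ext ?_ ?_⟩ <;>
      simp only [shearedFlow, mul_div_cancel₀ _ hb, add_sub_cancel]
    exact hq.symm

theorem isClosed_range_shearedFlow (hb : b ≠ 0) (hs : Continuous s) (hF : Continuous F)
    (p : ℂ × ℂ) : IsClosed (Set.range fun t => shearedFlow b s F t p) := by
  rw [range_shearedFlow hb]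
  exact isClosed_eq continuous_snd (by fun_prop)

end ShearedFlow

theorem stmt_11_general (s : ℂ → ℂ) (hs : Differentiable ℂ s)
    (b : ℂ) (hb : b ≠ 0) (A : Polynomial ℂ) :
    letI Y : ℂ × ℂ → ℂ × ℂ := fun p =>
      (b, A.eval p.1 * (p.2 - s p.1) + deriv s p.1 * b)
    -- X = φ_*X₁ is holomorphic on ℂ²
    Differentiable ℂ Y ∧
    ∃ Ψ : ℂ → ℂ × ℂ → ℂ × ℂ,
      -- complete: Ψ is a global flow of Y
      (∀ p, Ψ 0 p = p) ∧
      (∀ p t, HasDerivAt (fun τ => Ψ τ p) (Y (Ψ t p)) t) ∧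
      -- tangent to graph(s)
      (∀ t : ℂ, ∀ p : ℂ × ℂ, p.2 = s p.1 → (Ψ t p).2 = s (Ψ t p).1) ∧
      -- every trajectory is proper and biholomorphic to ℂ
      (∀ p : ℂ × ℂ, Function.Injective (fun t => Ψ t p) ∧
        IsClosed (Set.range (fun t => Ψ t p))) := by
  obtain ⟨F, hF⟩ := A.differentiable.isExactOn_univ
  have hF' : ∀ x, HasDerivAt F (A.eval x) x := fun x => hF x (Set.mem_univ x)
  refine ⟨differentiable_shearedField A.differentiable hs, shearedFlow b s F, shearedFlow_zero,
    hasDerivAt_shearedFlow hb hs hF', fun t _ => shearedFlow_snd_eq_of_snd_eq t, fun p =>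
    ⟨shearedFlow_injective hb p, isClosed_range_shearedFlow hb hs.continuous ?_ p⟩⟩
  exact continuous_iff_continuousAt.2 fun x => (hF' x).continuousAt

/-- for `b ≠ 0`, the push-forward `X = φ_*(b∂/∂x + A(x)t∂/∂t)` with
`φ(x,t) = (x, t + s(x))` is a complete holomorphic vector field tangent to `graph(s)`
all of whose trajectories are proper (closed in ℂ²) and biholomorphic to ℂ. -/
theorem stmt_11 (s : ℂ → ℂ) (hs : Differentiable ℂ s)
    (b : ℂ) (hb : b ≠ 0) (A : Polynomial ℂ) (hA : A ≠ 0) :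
    letI Y : ℂ × ℂ → ℂ × ℂ := fun p =>
      (b, A.eval p.1 * (p.2 - s p.1) + deriv s p.1 * b)
    -- X = φ_*X₁ is holomorphic on ℂ²
    Differentiable ℂ Y ∧
    ∃ Ψ : ℂ → ℂ × ℂ → ℂ × ℂ,
      -- complete: Ψ is a global flow of Y
      (∀ p, Ψ 0 p = p) ∧
      (∀ p t, HasDerivAt (fun τ => Ψ τ p) (Y (Ψ t p)) t) ∧
      -- tangent to graph(s)
      (∀ t : ℂ, ∀ p : ℂ × ℂ, p.2 = s p.1 → (Ψ t p).2 = s (Ψ t p).1) ∧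
      -- every trajectory is proper and biholomorphic to ℂ
      (∀ p : ℂ × ℂ, Function.Injective (fun t => Ψ t p) ∧
        IsClosed (Set.range (fun t => Ψ t p))) :=
  stmt_11_general s hs b hb A
end

section
/- Let s : ℂ → ℙ¹ be meromorphic with a single pole at z = 0 of order k, so s(z) = s₀(z)/z^k with s₀ entire and s₀(0) ≠ 0. Write h = s - 1/g with g(z) = z^k e^{-g₁(z)} for an entire g₁ chosen so that h is entire. Then φ(z,w) = (z, e^{-g₁(z)}(w - h(z))) is a fiber-preserving holomorphic automorphism of ℂ² with inverse φ⁻¹(x,y) = (x, e^{g₁(x)}y + h(x)) which maps graph(s) onto graph(1/z^k), i.e. φ(z, s(z)) = (z, 1/z^k) for all z ≠ 0. -/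
open Complex

/-! Since `exp (g₁ z)` never vanishes, `w ↦ exp (-g₁ z) * (w - h z)` is an affine bijection of each
fibre with inverse `y ↦ exp (g₁ z) * y + h z`. On the graph of `s`, the relation
`h = s - exp g₁ / z ^ k` makes `w - h z` collapse to `exp (g₁ z) / z ^ k`, and the exponential
factors cancel. -/

theorem exp_mul_exp_neg_mul_sub_add (a w b : ℂ) : exp a * (exp (-a) * (w - b)) + b = w := by
  rw [← mul_assoc, ← exp_add, add_neg_cancel, exp_zero, one_mul, sub_add_cancel]

theorem exp_neg_mul_exp_mul_add_sub (a y b : ℂ) : exp (-a) * (exp a * y + b - b) = y := by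
  rw [add_sub_cancel_right, ← mul_assoc, ← exp_add, neg_add_cancel, exp_zero, one_mul]

theorem exp_neg_mul_sub_sub_exp_div (a c d : ℂ) : exp (-a) * (c - (c - exp a / d)) = 1 / d := by
  rw [sub_sub_cancel, mul_div_assoc', ← exp_add, neg_add_cancel, exp_zero]

theorem stmt_12_general (k : ℕ) (s₀ g₁ h : ℂ → ℂ)
    (hg₁ : Differentiable ℂ g₁) (hh : Differentiable ℂ h)
    -- h = s - 1/g is the entire extension of s(z) - e^{g₁(z)}/z^k
    (hrel : ∀ z : ℂ, z ≠ 0 → h z = s₀ z / z ^ k - Complex.exp (g₁ z) / z ^ k) :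
    letI φ : ℂ × ℂ → ℂ × ℂ := fun p => (p.1, Complex.exp (-(g₁ p.1)) * (p.2 - h p.1))
    letI ψ : ℂ × ℂ → ℂ × ℂ := fun p => (p.1, Complex.exp (g₁ p.1) * p.2 + h p.1)
    Differentiable ℂ φ ∧ Differentiable ℂ ψ ∧
    (∀ p, ψ (φ p) = p) ∧ (∀ p, φ (ψ p) = p) ∧
    -- φ maps graph(s) onto graph(1/z^k): φ(z, s(z)) = (z, 1/z^k) for z ≠ 0
    (∀ z : ℂ, z ≠ 0 → φ (z, s₀ z / z ^ k) = (z, 1 / z ^ k)) := by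
  have hg₁' : Differentiable ℂ fun p : ℂ × ℂ => g₁ p.1 := hg₁.comp differentiable_fst
  have hh' : Differentiable ℂ fun p : ℂ × ℂ => h p.1 := hh.comp differentiable_fst
  refine ⟨?_, ?_, ?_, ?_, ?_⟩
  · exact differentiable_fst.prodMk (hg₁'.neg.cexp.mul (differentiable_snd.sub hh'))
  · exact differentiable_fst.prodMk ((hg₁'.cexp.mul differentiable_snd).add hh')
  · exact fun p => Prod.ext rfl (exp_mul_exp_neg_mul_sub_add _ _ _)
  · exact fun p => Prod.ext rfl (exp_neg_mul_exp_mul_add_sub _ _ _)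
  · intro z hz
    exact Prod.ext rfl (by simp only [hrel z hz, exp_neg_mul_sub_sub_exp_div])

/-- with `s(z) = s₀(z)/z^k`, `g(z) = z^k e^{-g₁(z)}` and `h = s - 1/g`
entire, the map `φ(z,w) = (z, e^{-g₁(z)}(w - h(z)))` is a fiber-preserving holomorphic
automorphism of ℂ² with inverse `φ⁻¹(x,y) = (x, e^{g₁(x)}y + h(x))`, mapping
`graph(s)` onto `graph(1/z^k)`. -/
theorem stmt_12 (k : ℕ) (hk : 0 < k) (s₀ g₁ h : ℂ → ℂ)
    (hs₀ : Differentiable ℂ s₀) (hs₀0 : s₀ 0 ≠ 0)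
    (hg₁ : Differentiable ℂ g₁) (hh : Differentiable ℂ h)
    -- h = s - 1/g is the entire extension of s(z) - e^{g₁(z)}/z^k
    (hrel : ∀ z : ℂ, z ≠ 0 → h z = s₀ z / z ^ k - Complex.exp (g₁ z) / z ^ k) :
    letI φ : ℂ × ℂ → ℂ × ℂ := fun p => (p.1, Complex.exp (-(g₁ p.1)) * (p.2 - h p.1))
    letI ψ : ℂ × ℂ → ℂ × ℂ := fun p => (p.1, Complex.exp (g₁ p.1) * p.2 + h p.1)
    Differentiable ℂ φ ∧ Differentiable ℂ ψ ∧
    (∀ p, ψ (φ p) = p) ∧ (∀ p, φ (ψ p) = p) ∧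
    -- φ maps graph(s) onto graph(1/z^k): φ(z, s(z)) = (z, 1/z^k) for z ≠ 0
    (∀ z : ℂ, z ≠ 0 → φ (z, s₀ z / z ^ k) = (z, 1 / z ^ k)) :=
  stmt_12_general k s₀ g₁ h hg₁ hh hrel
end

section
/- Let α : ℂ* × ℂ → ℂ* × ℂ be the biholomorphism α(x,t) = (x, t + 1/x^k), and let X₁ = ax ∂/∂x + A(x)t ∂/∂t with a ∈ ℂ and A(z) = -ak + A₀(z), A₀ ∈ z^k·ℂ[z]. Then the push-forward α_*X₁, a priori holomorphic only on ℂ* × ℂ, extends to the polynomial vector field Y₀ = az ∂/∂z + (A(z)w + (-(ak + A(z)))/z^k) ∂/∂w, which is holomorphic on all of ℂ² and tangent to the curve {w z^k = 1}. -/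
/-!
Write `A₀ = z^k B`, so that `A + ak = z^k B`. On `z ≠ 0` the `w`-component of `α_*X₁` is
`A(z)(w - z^{-k}) - ak z^{-k} = A(z) w - B(z)`, a polynomial. Along `Y₀` the derivative of
`F = w z^k - 1` is `(ak + A(z)) w z^k - z^k B(z) = z^k B(z) F`, which vanishes on `{F = 0}`.
-/

open Complex Polynomial

section VectorField

variable {R : Type*} [CommRing R]

theorem natCast_mul_pow_sub_one_mul (k : ℕ) (z : R) :
    (k : R) * z ^ (k - 1) * z = k * z ^ k := by
  rcases Nat.eq_zero_or_pos k with rfl | hk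
  · simp
  · rw [mul_assoc, pow_sub_one_mul hk.ne']

theorem lieDeriv_curve_eq (k : ℕ) (a b z w : R) :
    (k : R) * z ^ (k - 1) * w * (a * z) + z ^ k * ((-(a * k) + z ^ k * b) * w - b) =
      z ^ k * b * (w * z ^ k - 1) := by
  linear_combination a * w * natCast_mul_pow_sub_one_mul k z

theorem pushforward_eq {K : Type*} [Field K] (k : ℕ) (a b z w : K) (hz : z ≠ 0) :
    (-(a * k) + z ^ k * b) * (w - 1 / z ^ k) + (-(k : K) / z ^ (k + 1)) * (a * z) =
      (-(a * k) + z ^ k * b) * w - b := by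
  field_simp
  ring

end VectorField

theorem stmt_13_general (k : ℕ) (a : ℂ) (A₀ : Polynomial ℂ)
    (hdvd : (X : Polynomial ℂ) ^ k ∣ A₀) :
    ∃ B : Polynomial ℂ, A₀ = X ^ k * B ∧
      letI A : Polynomial ℂ := C (-(a * (k : ℂ))) + A₀
      letI Y₀ : ℂ × ℂ → ℂ × ℂ := fun p => (a * p.1, A.eval p.1 * p.2 - B.eval p.1)
      -- Y₀ is holomorphic (polynomial) on all of ℂ²
      Differentiable ℂ Y₀ ∧
      -- on z ≠ 0 it agrees with the push-forward α_*X₁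
      (∀ z w : ℂ, z ≠ 0 →
        Y₀ (z, w) = (a * z,
          A.eval z * (w - 1 / z ^ k) + (-(k : ℂ) / z ^ (k + 1)) * (a * z))) ∧
      -- Y₀ is tangent to {wz^k - 1 = 0}: the derivative of wz^k - 1 along Y₀
      -- vanishes on the curve
      (∀ z w : ℂ, w * z ^ k = 1 →
        (k : ℂ) * z ^ (k - 1) * w * (a * z) + z ^ k * (A.eval z * w - B.eval z) = 0) := by
  obtain ⟨B, rfl⟩ := hdvd
  refine ⟨B, rfl, ?_, fun z w hz => ?_, fun z w hw => ?_⟩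
  · fun_prop
  · simp only [eval_add, eval_C, eval_mul, eval_pow, eval_X, pushforward_eq k a _ z w hz]
  · simp only [eval_add, eval_C, eval_mul, eval_pow, eval_X, lieDeriv_curve_eq, hw, sub_self,
      mul_zero]

/-- with `A(z) = -ak + A₀(z)`, `A₀ ∈ z^k ℂ[z]`, the push-forward by
`α(x,t) = (x, t + 1/x^k)` of `X₁ = ax∂/∂x + A(x)t∂/∂t` extends from `ℂ* × ℂ` to the
polynomial vector field `Y₀ = az∂/∂z + (A(z)w - (ak + A(z))/z^k)∂/∂w`, holomorphic on
all of ℂ² and tangent to the curve `{wz^k = 1}`. -/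
theorem stmt_13 (k : ℕ) (hk : 0 < k) (a : ℂ) (A₀ : Polynomial ℂ)
    (hdvd : (X : Polynomial ℂ) ^ k ∣ A₀) :
    ∃ B : Polynomial ℂ, A₀ = X ^ k * B ∧
      letI A : Polynomial ℂ := C (-(a * (k : ℂ))) + A₀
      letI Y₀ : ℂ × ℂ → ℂ × ℂ := fun p => (a * p.1, A.eval p.1 * p.2 - B.eval p.1)
      -- Y₀ is holomorphic (polynomial) on all of ℂ²
      Differentiable ℂ Y₀ ∧
      -- on z ≠ 0 it agrees with the push-forward α_*X₁
      (∀ z w : ℂ, z ≠ 0 →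
        Y₀ (z, w) = (a * z,
          A.eval z * (w - 1 / z ^ k) + (-(k : ℂ) / z ^ (k + 1)) * (a * z))) ∧
      -- Y₀ is tangent to {wz^k - 1 = 0}: the derivative of wz^k - 1 along Y₀
      -- vanishes on the curve
      (∀ z w : ℂ, w * z ^ k = 1 →
        (k : ℂ) * z ^ (k - 1) * w * (a * z) + z ^ k * (A.eval z * w - B.eval z) = 0) :=
  stmt_13_general k a A₀ hdvd
end

section
/- The polynomial vector field Y₀ = az ∂/∂z + (A(z)w - (ak + A(z))/z^k) ∂/∂w with A(z) = -ak + A₀(z), A₀ ∈ z^kℂ[z], a ≠ 0, has a unique zero p, namely p = (0, w₀) with w₀ determined by A, and the quotient of the eigenvalues of the linear part DY₀(p) is -1/k (eigenvalues a and -ak). -/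
open Complex Polynomial

/-- `Y₀ = az∂/∂z + (A(z)w - B(z))∂/∂w`, with `A(z) = -ak + A₀(z)`,
`A₀ = z^k B`, `a ≠ 0`, has a unique zero `p = (0, B(0)/A(0))`, and the eigenvalues of
its linear part at `p` are `a` and `-ak`, whose quotient is `-1/k`. -/
theorem stmt_14 (k : ℕ) (hk : 0 < k) (a : ℂ) (ha : a ≠ 0)
    (A₀ B : Polynomial ℂ) (hB : A₀ = X ^ k * B) :
    letI A : Polynomial ℂ := C (-(a * (k : ℂ))) + A₀
    letI Y₀ : ℂ × ℂ → ℂ × ℂ := fun p => (a * p.1, A.eval p.1 * p.2 - B.eval p.1)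
    letI p₀ : ℂ × ℂ := (0, B.eval 0 / A.eval 0)
    -- unique zero
    {p : ℂ × ℂ | Y₀ p = 0} = {p₀} ∧
    -- eigenvalues of the linear part DY₀(p₀): a in the z-direction, -ak = A(0) in the
    -- w-direction
    fderiv ℂ Y₀ p₀ (0, 1) = (0, -(a * (k : ℂ))) ∧
    (fderiv ℂ Y₀ p₀ (1, 0)).1 = a ∧
    -- quotient of the eigenvalues
    a / (-(a * (k : ℂ))) = -1 / (k : ℂ) := by
  set A : Polynomial ℂ := C (-(a * (k : ℂ))) + A₀ with hA
  set Y₀ : ℂ × ℂ → ℂ × ℂ := fun p => (a * p.1, A.eval p.1 * p.2 - B.eval p.1) with hY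
  set p₀ : ℂ × ℂ := (0, B.eval 0 / A.eval 0) with hp
  have hk' : (k : ℂ) ≠ 0 := Nat.cast_ne_zero.mpr hk.ne'
  have hA0' : A₀.eval 0 = 0 := by
    simp [hB, zero_pow hk.ne']
  have hA0 : A.eval 0 = -(a * (k : ℂ)) := by
    simp [hA, hA0']
  have hA0ne : A.eval 0 ≠ 0 := by
    rw [hA0]
    exact neg_ne_zero.mpr (mul_ne_zero ha hk')
  -- the derivative
  have hder : HasFDerivAt Y₀
      (((a : ℂ) • ContinuousLinearMap.fst ℂ ℂ ℂ).prod
        (((A.eval p₀.1) • ContinuousLinearMap.snd ℂ ℂ ℂ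
          + p₀.2 • ((A.derivative.eval p₀.1) • ContinuousLinearMap.fst ℂ ℂ ℂ))
          - (B.derivative.eval p₀.1) • ContinuousLinearMap.fst ℂ ℂ ℂ)) p₀ := by
    apply HasFDerivAt.prodMk
    · exact (hasFDerivAt_fst.const_mul a)
    · have h1 : HasFDerivAt (fun p : ℂ × ℂ => A.eval p.1)
          ((A.derivative.eval p₀.1) • ContinuousLinearMap.fst ℂ ℂ ℂ) p₀ :=
        (A.hasDerivAt p₀.1).comp_hasFDerivAt p₀ hasFDerivAt_fst
      have h2 : HasFDerivAt (fun p : ℂ × ℂ => B.eval p.1)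
          ((B.derivative.eval p₀.1) • ContinuousLinearMap.fst ℂ ℂ ℂ) p₀ :=
        (B.hasDerivAt p₀.1).comp_hasFDerivAt p₀ hasFDerivAt_fst
      exact (h1.mul hasFDerivAt_snd).sub h2
  have hfd := hder.fderiv
  refine ⟨?_, ?_, ?_, ?_⟩
  · ext ⟨z, w⟩
    simp only [Set.mem_setOf_eq, Set.mem_singleton_iff, hY, hp, Prod.ext_iff, Prod.mk.injEq,
      Prod.fst_zero, Prod.snd_zero]
    constructor
    · rintro ⟨h1, h2⟩
      have hz : z = 0 := by
        rcases mul_eq_zero.mp h1 with h | h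
        · exact absurd h ha
        · exact h
      subst hz
      refine ⟨rfl, ?_⟩
      have h3 : A.eval 0 * w = B.eval 0 := sub_eq_zero.mp h2
      field_simp [hA0ne]
      linear_combination h3
    · rintro ⟨h1, h2⟩
      subst h1; subst h2
      constructor
      · ring
      · field_simp
        ring
  · rw [hfd]
    simp only [ContinuousLinearMap.prod_apply, ContinuousLinearMap.sub_apply,
      ContinuousLinearMap.add_apply, ContinuousLinearMap.smul_apply,
      ContinuousLinearMap.coe_fst', ContinuousLinearMap.coe_snd']
    simp [hA0]
    exact hA0
  · rw [hfd]
    simp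
  · field_simp
end

section
/- Let r, s ∈ ℕ⁺ with (r,s) = 1 and rs ≠ 1, a ∈ ℂ*, and C = {(x,y) ∈ ℂ² : y^r = a x^s, (x,y) ≠ (0,0)}. Then there exists a holomorphic map Γ : ℂ² → ℂ² with Jacobian determinant not identically zero whose image is contained in ℂ² \ C; in fact Γ = γ ∘ F where F : ℂ² → ℂ² \ {v = a} is a surjective dominating map and γ(u,v) = (v^q u^r, v^p u^s) with pr - qs = 1. -/
/-!
When `pr - qs = 1`, the point `(x, y) = γ(u, v)` satisfies `y^r = v x^s`, so
`y^r - a x^s = (v - a) x^s`. For `v ≠ a` this vanishes only if `x = 0`, and then `y = 0`; hence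
`γ` maps `ℂ × (ℂ \ {a})`, the image of `(u, t) ↦ (u, a + e^t)`, into the complement of `C`.
Rescaling `u` and `v` separately (Euler's identity) gives `uv · det Dγ = (pr - qs) xy = xy`,
so `γ`, and with it `Γ`, is nondegenerate away from the axes.
-/

open Complex

theorem ContinuousLinearMap.det_prod_self_eq {R : Type*} [CommRing R] [TopologicalSpace R]
    (L : R × R →L[R] R × R) :
    L.det = (L (1, 0)).1 * (L (0, 1)).2 - (L (0, 1)).1 * (L (1, 0)).2 := by
  rw [ContinuousLinearMap.det, ← LinearMap.det_toMatrix (Module.Basis.finTwoProd R),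
    Matrix.det_fin_two]
  simp [LinearMap.toMatrix_apply]

theorem ContinuousLinearMap.det_comp {R M : Type*} [CommRing R] [TopologicalSpace M]
    [AddCommGroup M] [Module R M] (f g : M →L[R] M) : (f.comp g).det = f.det * g.det :=
  LinearMap.det_comp _ _

theorem Nat.exists_mul_eq_mul_add_one_of_coprime {r s : ℕ} (hr : 0 < r) (h : r.Coprime s) :
    ∃ p q : ℕ, p * r = q * s + 1 := by
  rcases lt_trichotomy s 1 with hs | rfl | hs
  · obtain rfl : s = 0 := by omega
    obtain rfl : r = 1 := by simpa using h
    exact ⟨1, 0, rfl⟩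
  · exact ⟨1, r - 1, by omega⟩
  · obtain ⟨p, -, hp⟩ := Nat.exists_mul_mod_eq_one_of_coprime h hs
    refine ⟨p, r * p / s, ?_⟩
    have := Nat.div_add_mod (r * p) s
    rw [mul_comm p r, mul_comm (r * p / s) s]
    omega

section monomialMap

variable {R : Type*} [CommSemiring R] {p q r s : ℕ}

def monomialMap (p q r s : ℕ) (w : R × R) : R × R :=
  (w.2 ^ q * w.1 ^ r, w.2 ^ p * w.1 ^ s)

theorem monomialMap_snd_pow (hpq : p * r = q * s + 1) (w : R × R) :
    (monomialMap p q r s w).2 ^ r = w.2 * (monomialMap p q r s w).1 ^ s := by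
  simp only [monomialMap, mul_pow, ← pow_mul, hpq, pow_succ]
  ring

theorem monomialMap_eq_zero_of_snd_pow_eq {R : Type*} [CommRing R] [NoZeroDivisors R]
    (hpq : p * r = q * s + 1) {w : R × R} {a : R} (hwa : w.2 ≠ a)
    (h : (monomialMap p q r s w).2 ^ r = a * (monomialMap p q r s w).1 ^ s) :
    monomialMap p q r s w = 0 := by
  set x := (monomialMap p q r s w).1
  set y := (monomialMap p q r s w).2
  have hxs : x ^ s = 0 := by
    have : (w.2 - a) * x ^ s = 0 := by
      rw [sub_mul, ← monomialMap_snd_pow hpq, h, sub_self]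
    exact (mul_eq_zero.mp this).resolve_left (sub_ne_zero.mpr hwa)
  have hyr : y ^ r = 0 := by rw [h, hxs, mul_zero]
  exact Prod.ext (eq_zero_of_pow_eq_zero hxs) (eq_zero_of_pow_eq_zero hyr)

end monomialMap

section fderiv

variable {𝕜 : Type*} [NontriviallyNormedField 𝕜] {p q r s : ℕ}

theorem differentiable_monomialMap : Differentiable 𝕜 (monomialMap (R := 𝕜) p q r s) := by
  unfold monomialMap; fun_prop

/-- Euler's identity for the rescaling `c ↦ γ(c^i u, c^j v) = (c^(qj+ri) x, c^(pj+si) y)`. -/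
theorem fderiv_monomialMap_apply (i j : ℕ) (w : 𝕜 × 𝕜) :
    fderiv 𝕜 (monomialMap p q r s) w (i * w.1, j * w.2) =
      (((q * j + r * i : ℕ) : 𝕜) * (monomialMap p q r s w).1,
        ((p * j + s * i : ℕ) : 𝕜) * (monomialMap p q r s w).2) := by
  have hcurve : HasDerivAt (fun c : 𝕜 => (c ^ i * w.1, c ^ j * w.2))
      ((i : 𝕜) * w.1, (j : 𝕜) * w.2) 1 := by
    simpa using ((hasDerivAt_pow i 1).mul_const w.1).prodMk ((hasDerivAt_pow j 1).mul_const w.2)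
  have hcomp := (differentiable_monomialMap (p := p) (q := q) (r := r) (s := s)
    _).hasFDerivAt.comp_hasDerivAt (1 : 𝕜) hcurve
  have hscaled : HasDerivAt (fun c : 𝕜 => monomialMap p q r s (c ^ i * w.1, c ^ j * w.2))
      (((q * j + r * i : ℕ) : 𝕜) * (monomialMap p q r s w).1,
        ((p * j + s * i : ℕ) : 𝕜) * (monomialMap p q r s w).2) 1 := by
    have h := ((hasDerivAt_pow (q * j + r * i) (1 : 𝕜)).mul_const (monomialMap p q r s w).1).prodMk
      ((hasDerivAt_pow (p * j + s * i) (1 : 𝕜)).mul_const (monomialMap p q r s w).2)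
    simp only [one_pow, mul_one] at h
    convert h using 2 with c
    simp only [monomialMap, mul_pow, ← pow_mul, pow_add]
    ext <;> ring
  simpa using hcomp.unique hscaled

theorem det_fderiv_monomialMap_mul (hpq : p * r = q * s + 1) (w : 𝕜 × 𝕜) :
    (fderiv 𝕜 (monomialMap p q r s) w).det * (w.1 * w.2) =
      (monomialMap p q r s w).1 * (monomialMap p q r s w).2 := by
  set L := fderiv 𝕜 (monomialMap p q r s) w
  set x := (monomialMap p q r s w).1
  set y := (monomialMap p q r s w).2
  have hu : L (w.1, 0) = (r * x, s * y) := by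
    simpa using fderiv_monomialMap_apply (p := p) (q := q) (r := r) (s := s) 1 0 w
  have hv : L (0, w.2) = (q * x, p * y) := by
    simpa using fderiv_monomialMap_apply (p := p) (q := q) (r := r) (s := s) 0 1 w
  calc L.det * (w.1 * w.2)
      = (L (w.1, 0)).1 * (L (0, w.2)).2 - (L (0, w.2)).1 * (L (w.1, 0)).2 := by
        have hu' : ((w.1, 0) : 𝕜 × 𝕜) = w.1 • (1, 0) := by simp
        have hv' : ((0, w.2) : 𝕜 × 𝕜) = w.2 • (0, 1) := by simp
        rw [ContinuousLinearMap.det_prod_self_eq, hu', hv', map_smul, map_smul]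
        simp only [Prod.smul_fst, Prod.smul_snd, smul_eq_mul]
        ring
    _ = ((p * r : ℕ) - (q * s : ℕ) : 𝕜) * x * y := by rw [hu, hv]; push_cast; ring
    _ = x * y := by rw [hpq]; push_cast; ring

theorem det_fderiv_monomialMap_ne_zero (hpq : p * r = q * s + 1) {w : 𝕜 × 𝕜} (hu : w.1 ≠ 0)
    (hv : w.2 ≠ 0) : (fderiv 𝕜 (monomialMap p q r s) w).det ≠ 0 := by
  refine left_ne_zero_of_mul (b := w.1 * w.2) ?_
  rw [det_fderiv_monomialMap_mul hpq]
  simp [monomialMap, hu, hv]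

end fderiv

noncomputable def expCover (a : ℂ) (w : ℂ × ℂ) : ℂ × ℂ :=
  (w.1, a + exp w.2)

theorem differentiable_expCover (a : ℂ) : Differentiable ℂ (expCover a) := by
  unfold expCover; fun_prop

theorem range_expCover (a : ℂ) : Set.range (expCover a) = {v | v.2 ≠ a} := by
  ext ⟨u, v⟩
  constructor
  · rintro ⟨w, hw⟩
    simp [expCover, ← hw, exp_ne_zero]
  · intro hv
    refine ⟨(u, log (v - a)), ?_⟩
    simp [expCover, exp_log (sub_ne_zero.mpr hv)]

theorem det_fderiv_expCover (a : ℂ) (w : ℂ × ℂ) : (fderiv ℂ (expCover a) w).det = exp w.2 := by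
  have h : HasFDerivAt (expCover a)
      ((ContinuousLinearMap.fst ℂ ℂ ℂ).prod
        ((ContinuousLinearMap.smulRight (1 : ℂ →L[ℂ] ℂ) (exp w.2)).comp
          (ContinuousLinearMap.snd ℂ ℂ ℂ))) w :=
    hasFDerivAt_fst.prodMk (((hasDerivAt_exp w.2).const_add a).hasFDerivAt.comp w hasFDerivAt_snd)
  rw [h.fderiv, ContinuousLinearMap.det_prod_self_eq]
  simp

theorem stmt_17_general (r s : ℕ) (hr : 0 < r) (hcop : Nat.Coprime r s) (a : ℂ) :
    ∃ (Γ F : ℂ × ℂ → ℂ × ℂ) (p q : ℕ),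
      p * r = q * s + 1 ∧
      Differentiable ℂ F ∧ Differentiable ℂ Γ ∧
      -- F is a surjective dominating map onto ℂ² \ {v = a}
      Set.range F = {v : ℂ × ℂ | v.2 ≠ a} ∧
      -- Γ = γ ∘ F with γ(u,v) = (v^q u^r, v^p u^s)
      (∀ w : ℂ × ℂ, Γ w = ((F w).2 ^ q * (F w).1 ^ r, (F w).2 ^ p * (F w).1 ^ s)) ∧
      -- the image of Γ avoids C = {y^r = ax^s} \ {(0,0)}
      Set.range Γ ⊆ {x : ℂ × ℂ | ¬(x.2 ^ r = a * x.1 ^ s ∧ x ≠ (0, 0))} ∧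
      -- the Jacobian determinant of Γ is not identically zero
      (∃ w : ℂ × ℂ,
        (fderiv ℂ Γ w (1, 0)).1 * (fderiv ℂ Γ w (0, 1)).2 -
          (fderiv ℂ Γ w (0, 1)).1 * (fderiv ℂ Γ w (1, 0)).2 ≠ 0) := by
  obtain ⟨p, q, hpq⟩ := Nat.exists_mul_eq_mul_add_one_of_coprime hr hcop
  have hF := differentiable_expCover a
  have hγ : Differentiable ℂ (monomialMap (R := ℂ) p q r s) := differentiable_monomialMap
  refine ⟨monomialMap p q r s ∘ expCover a, expCover a, p, q, hpq, hF, hγ.comp hF,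
    range_expCover a, fun w => rfl, ?_, ?_⟩
  · rintro _ ⟨w, rfl⟩ ⟨hcurve, hne⟩
    have hw : (expCover a w).2 ≠ a := by simp [expCover, exp_ne_zero]
    exact hne (monomialMap_eq_zero_of_snd_pow_eq hpq hw hcurve)
  · obtain ⟨v, hv⟩ := Infinite.exists_notMem_finset ({0, a} : Finset ℂ)
    rw [Finset.mem_insert, Finset.mem_singleton, not_or] at hv
    obtain ⟨w, hw⟩ : (1, v) ∈ Set.range (expCover a) := by
      rw [range_expCover]
      exact hv.2
    refine ⟨w, ?_⟩
    rw [← ContinuousLinearMap.det_prod_self_eq, fderiv_comp w (hγ _) (hF w),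
      ContinuousLinearMap.det_comp, det_fderiv_expCover, hw]
    exact mul_ne_zero (det_fderiv_monomialMap_ne_zero hpq one_ne_zero hv.1) (exp_ne_zero _)

/-- for `C = {y^r = ax^s} \ {(0,0)}` with `(r,s) = 1`, `rs ≠ 1`, `a ≠ 0`,
there is a dominating map `Γ = γ ∘ F : ℂ² → ℂ² \ C`, where `F` is a surjective
dominating map onto `ℂ² \ {v = a}` and `γ(u,v) = (v^q u^r, v^p u^s)` with `pr - qs = 1`. -/
theorem stmt_17 (r s : ℕ) (hr : 0 < r) (hs : 0 < s) (hcop : Nat.Coprime r s)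
    (hrs : r * s ≠ 1) (a : ℂ) (ha : a ≠ 0) :
    ∃ (Γ F : ℂ × ℂ → ℂ × ℂ) (p q : ℕ),
      p * r = q * s + 1 ∧
      Differentiable ℂ F ∧ Differentiable ℂ Γ ∧
      -- F is a surjective dominating map onto ℂ² \ {v = a}
      Set.range F = {v : ℂ × ℂ | v.2 ≠ a} ∧
      -- Γ = γ ∘ F with γ(u,v) = (v^q u^r, v^p u^s)
      (∀ w : ℂ × ℂ, Γ w = ((F w).2 ^ q * (F w).1 ^ r, (F w).2 ^ p * (F w).1 ^ s)) ∧
      -- the image of Γ avoids C = {y^r = ax^s} \ {(0,0)}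
      Set.range Γ ⊆ {x : ℂ × ℂ | ¬(x.2 ^ r = a * x.1 ^ s ∧ x ≠ (0, 0))} ∧
      -- the Jacobian determinant of Γ is not identically zero
      (∃ w : ℂ × ℂ,
        (fderiv ℂ Γ w (1, 0)).1 * (fderiv ℂ Γ w (0, 1)).2 -
          (fderiv ℂ Γ w (0, 1)).1 * (fderiv ℂ Γ w (1, 0)).2 ≠ 0) :=
  stmt_17_general r s hr hcop a
end
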